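/- arXiv:2504.01425 — 3 statements merged into one kernel-verified Lean document; each statement's English description precedes it below -/
import Mathlib

section
/- Suppose v : ℝ → ℝ is continuous with v(t) > η > 0 for all t ≥ 0, and x : ℝ → ℝ is bounded with x(t) → 0 as t → ∞. Then the function t ↦ ∫₀ᵗ exp(−∫ₛᵗ v(u) du)·x(s) ds tends to 0 as t → ∞. -/
/-!
Since `v > η` on `[0, ∞)`, the kernel `exp (-∫ₛᵗ v)` is dominated by `exp (-η (t - s))`, so the
integral is bounded by the convolution of the integrable kernel `r ↦ exp (-η r)` on `(0, ∞)` with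
`|x|`. After the substitution `r = t - s`, dominated convergence shows that the convolution of any
integrable kernel with a bounded function tending to `0` tends to `0`.
-/

open Real Filter MeasureTheory Set Topology

theorem tendsto_intervalIntegral_comp_sub_mul_of_tendsto_zero {g y : ℝ → ℝ} {M : ℝ}
    (hg : IntegrableOn g (Ioi 0)) (hym : Measurable y) (hyb : ∀ s, |y s| ≤ M)
    (hy0 : Tendsto y atTop (𝓝 0)) :
    Tendsto (fun t => ∫ s in 0..t, g (t - s) * y s) atTop (𝓝 0) := by
  set F : ℝ → ℝ → ℝ := fun t => (Iic t).indicator fun r => g r * y (t - r)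
  have hF : ∀ t, 0 ≤ t → ∫ s in 0..t, g (t - s) * y s = ∫ r in Ioi 0, F t r := by
    intro t ht
    rw [integral_indicator measurableSet_Iic, Measure.restrict_restrict measurableSet_Iic,
      Iic_inter_Ioi, ← intervalIntegral.integral_of_le ht]
    simpa using intervalIntegral.integral_comp_sub_left (a := 0) (b := t)
      (fun r => g r * y (t - r)) t
  have hF_meas : ∀ t, AEStronglyMeasurable (F t) (volume.restrict (Ioi 0)) := fun t =>
    (hg.aestronglyMeasurable.mul
      (hym.comp (measurable_const.sub measurable_id)).aestronglyMeasurable).indicator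
      measurableSet_Iic
  have hF_bound : ∀ t r, ‖F t r‖ ≤ ‖g r‖ * M := by
    intro t r
    have hM : 0 ≤ M := (abs_nonneg _).trans (hyb 0)
    by_cases hr : r ≤ t
    · simpa [F, hr] using mul_le_mul_of_nonneg_left (hyb (t - r)) (abs_nonneg (g r))
    · simpa [F, hr] using mul_nonneg (abs_nonneg (g r)) hM
  have hF_lim : ∀ r, Tendsto (fun t => F t r) atTop (𝓝 0) := by
    intro r
    have : Tendsto (fun t => g r * y (t - r)) atTop (𝓝 0) := by
      simpa [sub_eq_add_neg] using
        (hy0.comp (tendsto_atTop_add_const_right _ (-r) tendsto_id)).const_mul (g r)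
    refine this.congr' ((eventually_ge_atTop r).mono fun t ht => ?_)
    simp [F, ht]
  have hlim := tendsto_integral_filter_of_dominated_convergence (μ := volume.restrict (Ioi 0))
    (l := atTop) (F := F) (f := fun _ => 0) (fun r => ‖g r‖ * M)
    (Eventually.of_forall hF_meas) (Eventually.of_forall fun t => ae_of_all _ (hF_bound t))
    (hg.norm.mul_const M) (ae_of_all _ hF_lim)
  rw [integral_zero] at hlim
  exact hlim.congr' ((eventually_ge_atTop 0).mono fun t ht => (hF t ht).symm)

theorem exp_neg_integral_le_exp_neg_mul_sub {v : ℝ → ℝ} {η s t : ℝ}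
    (hv : IntervalIntegrable v volume s t) (hst : s ≤ t) (hvη : ∀ u ∈ Icc s t, η ≤ v u) :
    exp (-∫ u in s..t, v u) ≤ exp (-η * (t - s)) := by
  have h := intervalIntegral.integral_mono_on hst intervalIntegrable_const hv hvη
  rw [intervalIntegral.integral_const, smul_eq_mul] at h
  exact exp_le_exp.2 (by linarith)

theorem norm_integral_exp_neg_integral_mul_le {v x : ℝ → ℝ} {η t : ℝ}
    (hv : IntervalIntegrable v volume 0 t) (hvη : ∀ u ∈ Icc 0 t, η ≤ v u)
    (hx : IntervalIntegrable x volume 0 t) (ht : 0 ≤ t) :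
    ‖∫ s in 0..t, exp (-∫ u in s..t, v u) * x s‖ ≤ ∫ s in 0..t, exp (-η * (t - s)) * |x s| := by
  refine intervalIntegral.norm_integral_le_of_norm_le ht (ae_of_all _ fun s hs => ?_)
    (hx.abs.continuousOn_mul (by fun_prop))
  have hsub : uIcc s t ⊆ uIcc 0 t := uIcc_subset_uIcc_right (Ioc_subset_Icc_self (by simpa [ht]))
  rw [norm_mul, norm_of_nonneg (exp_pos _).le, norm_eq_abs]
  exact mul_le_mul_of_nonneg_right (exp_neg_integral_le_exp_neg_mul_sub (hv.mono_set hsub) hs.2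
    fun u hu => hvη u ⟨hs.1.le.trans hu.1, hu.2⟩) (abs_nonneg _)

theorem stmt_3 (v x : ℝ → ℝ) (hv : Continuous v) (η : ℝ) (hη : 0 < η)
    (hvη : ∀ t : ℝ, 0 ≤ t → η < v t)
    (hxm : Measurable x) (M : ℝ) (hxb : ∀ t : ℝ, |x t| ≤ M)
    (hx0 : Tendsto x atTop (nhds 0)) :
    Tendsto (fun t : ℝ => ∫ s in (0:ℝ)..t, Real.exp (-∫ u in s..t, v u) * x s)
      atTop (nhds 0) := by
  have hx : ∀ t, IntervalIntegrable x volume 0 t := fun t =>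
    intervalIntegrable_const.mono_fun' hxm.aestronglyMeasurable (ae_of_all _ fun s => hxb s)
  refine squeeze_zero_norm' ((eventually_ge_atTop 0).mono fun t ht =>
    norm_integral_exp_neg_integral_mul_le (hv.intervalIntegrable 0 t)
      (fun u hu => (hvη u hu.1).le) (hx t) ht) ?_
  exact tendsto_intervalIntegral_comp_sub_mul_of_tendsto_zero (exp_neg_integrableOn_Ioi 0 hη)
    hxm.abs (fun s => (abs_abs (x s)).trans_le (hxb s)) (by simpa using hx0.abs)
end

section
/- Let v : ℝ → ℝ be continuous with v(t) > η for all t ≥ 0, let 0 < λ < η, and let x : ℝ → ℝ be a bounded measurable function such that e^{λt} x(t) → 0 as t → ∞. Then e^{λt} ∫₀ᵗ exp(−∫ₛᵗ v(u) du)·x(s) ds → 0 as t → ∞. -/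
/-!
On `[s, t] ⊆ [0, ∞)` we have `v > η`, so `exp (-∫ₛᵗ v) ≤ exp (-η (t - s))` and
`e^{λt} |∫₀ᵗ exp (-∫ₛᵗ v) x(s) ds| ≤ ∫₀ᵗ e^{-(η-λ)(t-s)} g(s) ds` with `g(s) = |e^{λs} x(s)|`.
The function `g` is bounded and tends to `0`; after the substitution `r = t - s`, dominated
convergence with the integrable majorant `e^{-(η-λ)r} sup g` shows that the right-hand side
tends to `0`.
-/

open Real Filter MeasureTheory Set Topology

theorem integral_exp_neg_mul_sub_mul_eq_setIntegral_indicator (c : ℝ) (g : ℝ → ℝ) {t : ℝ}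
    (ht : 0 ≤ t) :
    ∫ s in (0:ℝ)..t, exp (-c * (t - s)) * g s
      = ∫ r in Ioi 0, (Iic t).indicator (fun r => exp (-c * r) * g (t - r)) r := by
  rw [setIntegral_indicator measurableSet_Iic, Ioi_inter_Iic,
    ← intervalIntegral.integral_of_le ht]
  simpa using (intervalIntegral.integral_comp_sub_left (fun r => exp (-c * r) * g (t - r)) t
    (a := 0) (b := t))

theorem tendsto_integral_exp_neg_mul_sub_mul {c G : ℝ} (hc : 0 < c) {g : ℝ → ℝ}
    (hgm : Measurable g) (hgG : ∀ s, |g s| ≤ G) (hg : Tendsto g atTop (𝓝 0)) :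
    Tendsto (fun t => ∫ s in (0:ℝ)..t, exp (-c * (t - s)) * g s) atTop (𝓝 0) := by
  have hlim : Tendsto (fun t => ∫ r in Ioi 0, (Iic t).indicator
      (fun r => exp (-c * r) * g (t - r)) r) atTop (𝓝 0) := by
    have := tendsto_integral_filter_of_dominated_convergence (μ := volume.restrict (Ioi (0:ℝ)))
      (l := atTop)
      (F := fun t => (Iic t).indicator (fun r => exp (-c * r) * g (t - r))) (f := fun _ => 0)
      (fun r => exp (-c * r) * G) ?_ ?_
      ((exp_neg_integrableOn_Ioi 0 hc).mul_const G) ?_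
    · simpa using this
    · refine .of_forall fun t => ?_
      exact ((by fun_prop : Measurable fun r => exp (-c * r) * g (t - r)).indicator
        measurableSet_Iic).aestronglyMeasurable
    · refine .of_forall fun t => .of_forall fun r => ?_
      refine (norm_indicator_le_norm_self _ _).trans ?_
      rw [norm_mul, norm_of_nonneg (exp_pos _).le]
      exact mul_le_mul_of_nonneg_left (hgG _) (exp_pos _).le
    · refine .of_forall fun r => ?_
      have hshift : Tendsto (fun t => exp (-c * r) * g (t - r)) atTop (𝓝 0) := by
        simpa [sub_eq_add_neg] using
          (hg.comp (tendsto_atTop_add_const_right _ (-r) tendsto_id)).const_mul (exp (-c * r))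
      refine hshift.congr' ?_
      filter_upwards [eventually_ge_atTop r] with t ht
      rw [indicator_of_mem (mem_Iic.2 ht)]
  refine hlim.congr' ?_
  filter_upwards [eventually_ge_atTop 0] with t ht
  rw [integral_exp_neg_mul_sub_mul_eq_setIntegral_indicator c g ht]

theorem intervalIntegrable_of_abs_le {x : ℝ → ℝ} (hxm : Measurable x) {M : ℝ}
    (hxb : ∀ t, |x t| ≤ M) (a b : ℝ) : IntervalIntegrable x volume a b :=
  have h : ∀ a b : ℝ, IntegrableOn x (Ioc a b) :=
    fun a b => .of_bound measure_Ioc_lt_top hxm.aestronglyMeasurable M (.of_forall hxb)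
  ⟨h a b, h b a⟩

theorem continuous_integral_left {v : ℝ → ℝ} (hv : Continuous v) (t : ℝ) :
    Continuous fun s => ∫ u in s..t, v u := by
  simp_rw [intervalIntegral.integral_symm t]
  exact (intervalIntegral.continuous_primitive (fun a b => hv.intervalIntegrable a b) t).neg

theorem exp_neg_integral_le_exp_neg_mul {v : ℝ → ℝ} {η s t : ℝ} (hst : s ≤ t)
    (hv : IntervalIntegrable v volume s t) (hvη : ∀ u ∈ Icc s t, η ≤ v u) :
    exp (-∫ u in s..t, v u) ≤ exp (-η * (t - s)) := by
  have := intervalIntegral.integral_mono_on hst intervalIntegrable_const hv hvη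
  rw [intervalIntegral.integral_const, smul_eq_mul] at this
  exact exp_le_exp.2 (by linarith)

theorem exists_forall_abs_exp_mul_le {x : ℝ → ℝ} {lam M : ℝ} (hlam : 0 ≤ lam)
    (hxb : ∀ t, |x t| ≤ M) (hx0 : Tendsto (fun t => exp (lam * t) * x t) atTop (𝓝 0)) :
    ∃ G, ∀ s, |exp (lam * s) * x s| ≤ G := by
  obtain ⟨T, hT⟩ := eventually_atTop.1 (hx0.abs.eventually_le_const (by simp : |(0:ℝ)| < 1))
  refine ⟨max 1 (exp (lam * T) * M), fun s => ?_⟩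
  rcases le_total T s with hs | hs
  · exact (hT s hs).trans (le_max_left _ _)
  · rw [abs_mul, abs_exp]
    refine le_max_of_le_right (mul_le_mul (exp_le_exp.2 ?_) (hxb s) (abs_nonneg _) (exp_pos _).le)
    exact mul_le_mul_of_nonneg_left hs hlam

theorem norm_exp_mul_integral_le {v x : ℝ → ℝ} (hv : Continuous v) {η lam : ℝ}
    (hvη : ∀ t : ℝ, 0 ≤ t → η < v t) {t : ℝ} (hx : IntervalIntegrable x volume 0 t)
    (ht : 0 ≤ t) :
    ‖exp (lam * t) * ∫ s in (0:ℝ)..t, exp (-∫ u in s..t, v u) * x s‖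
      ≤ ∫ s in (0:ℝ)..t, exp (-(η - lam) * (t - s)) * |exp (lam * s) * x s| := by
  have hφ : Continuous fun s => exp (-∫ u in s..t, v u) :=
    (continuous_integral_left hv t).neg.rexp
  have hψ : Continuous fun s => exp (-(η - lam) * (t - s)) := by fun_prop
  rw [norm_mul, norm_of_nonneg (exp_pos _).le]
  calc exp (lam * t) * ‖∫ s in (0:ℝ)..t, exp (-∫ u in s..t, v u) * x s‖
      ≤ exp (lam * t) * ∫ s in (0:ℝ)..t, ‖exp (-∫ u in s..t, v u) * x s‖ := by
        gcongr; exact intervalIntegral.norm_integral_le_integral_norm ht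
    _ = ∫ s in (0:ℝ)..t, exp (lam * t) * ‖exp (-∫ u in s..t, v u) * x s‖ :=
        (intervalIntegral.integral_const_mul _ _).symm
    _ ≤ ∫ s in (0:ℝ)..t, exp (-(η - lam) * (t - s)) * |exp (lam * s) * x s| := by
        refine intervalIntegral.integral_mono_on ht
          ((hx.continuousOn_mul hφ.continuousOn).norm.const_mul _)
          ((hx.continuousOn_mul (continuous_const.mul continuous_id).rexp.continuousOn).abs
            |>.continuousOn_mul hψ.continuousOn)
          fun s hs => ?_
        have hexp := exp_neg_integral_le_exp_neg_mul hs.2 (hv.intervalIntegrable s t)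
          fun u hu => (hvη u (hs.1.trans hu.1)).le
        calc exp (lam * t) * ‖exp (-∫ u in s..t, v u) * x s‖
            = exp (lam * t) * (exp (-∫ u in s..t, v u) * |x s|) := by
              rw [norm_mul, norm_of_nonneg (exp_pos _).le, norm_eq_abs]
          _ ≤ exp (lam * t) * (exp (-η * (t - s)) * |x s|) := by gcongr
          _ = exp (-(η - lam) * (t - s)) * |exp (lam * s) * x s| := by
              rw [abs_mul, abs_exp, ← mul_assoc, ← mul_assoc, ← exp_add, ← exp_add]
              ring_nf

theorem stmt_4 (v x : ℝ → ℝ) (hv : Continuous v) (η lam : ℝ) (hη : 0 < lam)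
    (hlam : lam < η) (hvη : ∀ t : ℝ, 0 ≤ t → η < v t)
    (hxm : Measurable x) (M : ℝ) (hxb : ∀ t : ℝ, |x t| ≤ M)
    (hx0 : Tendsto (fun t : ℝ => Real.exp (lam * t) * x t) atTop (nhds 0)) :
    Tendsto (fun t : ℝ =>
        Real.exp (lam * t) * ∫ s in (0:ℝ)..t, Real.exp (-∫ u in s..t, v u) * x s)
      atTop (nhds 0) := by
  obtain ⟨G, hG⟩ := exists_forall_abs_exp_mul_le hη.le hxb hx0
  have hconv := tendsto_integral_exp_neg_mul_sub_mul (sub_pos.2 hlam) (by fun_prop)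
    (fun s => (abs_abs _).trans_le (hG s)) (by simpa using hx0.abs)
  refine squeeze_zero_norm' ?_ hconv
  filter_upwards [eventually_ge_atTop 0] with t ht
  exact norm_exp_mul_integral_le hv hvη (intervalIntegrable_of_abs_le hxm hxb 0 t) ht
end

section
/- Let η > 0, p ≥ 0, (t_k) a strictly increasing sequence tending to ∞ with bounded gaps, and (x_k) a real sequence with x_k → 0. If p_k ≤ p(t_k − t_{k−1}) for all k, then S(t) := ∑_{k : t_k ≤ t} p_k e^{−η(t − t_k)} |x_k| tends to 0 as t → ∞. -/
open Real Filter

private lemma key_sum (η p Δ : ℝ) (hη : 0 < η) (hp : 0 ≤ p)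
    (tk : ℕ → ℝ) (hmono : StrictMono tk)
    (hgap : ∀ k : ℕ, 1 ≤ k → tk k - tk (k - 1) ≤ Δ)
    (pk : ℕ → ℝ) (hpk0 : ∀ k, 0 ≤ pk k)
    (hpk : ∀ k : ℕ, 1 ≤ k → pk k ≤ p * (tk k - tk (k - 1)))
    (t : ℝ) (M : ℕ) :
    ∑ k ∈ Finset.Ico 1 M, (if tk k ≤ t then pk k * Real.exp (-η * (t - tk k)) else 0)
      ≤ p * Real.exp (η * Δ) / η := by
  have hC0 : 0 ≤ p * Real.exp (η * Δ) / η := by positivity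
  set g : ℕ → ℝ := fun k => Real.exp (η * min (tk k) t) with hg
  have hper : ∀ k : ℕ, 1 ≤ k →
      (if tk k ≤ t then pk k * Real.exp (-η * (t - tk k)) else 0)
        ≤ p * Real.exp (η * Δ) / η * Real.exp (-η * t) * (g k - g (k - 1)) := by
    intro k hk
    have hlt : tk (k - 1) < tk k := hmono (by omega)
    have hd : 0 < tk k - tk (k - 1) := by linarith
    have hdΔ : tk k - tk (k - 1) ≤ Δ := hgap k hk
    by_cases h : tk k ≤ t
    · rw [if_pos h]
      have hg1 : g k = Real.exp (η * tk k) := by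
        simp [hg, min_eq_left h]
      have hg2 : g (k - 1) = Real.exp (η * tk (k - 1)) := by
        simp [hg, min_eq_left (le_of_lt (lt_of_lt_of_le hlt h))]
      rw [hg1, hg2]
      have he : Real.exp (-η * (t - tk k)) = Real.exp (-η * t) * Real.exp (η * tk k) := by
        rw [← Real.exp_add]; ring_nf
      rw [he]
      have hkey : pk k * Real.exp (η * tk k) * η
          ≤ p * Real.exp (η * Δ) * (Real.exp (η * tk k) - Real.exp (η * tk (k - 1))) := by
        have hEb : Real.exp (η * tk (k-1)) * Real.exp (η * (tk k - tk (k-1)))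
            = Real.exp (η * tk k) := by
          rw [← Real.exp_add]; ring_nf
        have h2 : η * (tk k - tk (k-1)) + 1 ≤ Real.exp (η * (tk k - tk (k-1))) :=
          Real.add_one_le_exp _
        have h3 : Real.exp (η * (tk k - tk (k-1))) ≤ Real.exp (η * Δ) :=
          Real.exp_le_exp.2 (by nlinarith)
        have hpkd : pk k ≤ p * (tk k - tk (k-1)) := hpk k hk
        have hEa : 0 < Real.exp (η * tk (k-1)) := Real.exp_pos _
        have hEd : 0 < Real.exp (η * (tk k - tk (k-1))) := Real.exp_pos _
        have hEΔ : 0 < Real.exp (η * Δ) := Real.exp_pos _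
        rw [← hEb]
        have h2' : η * (tk k - tk (k-1)) ≤ Real.exp (η * (tk k - tk (k-1))) - 1 := by linarith
        have q1 : η * (tk k - tk (k-1)) * Real.exp (η * (tk k - tk (k-1)))
            ≤ (Real.exp (η * (tk k - tk (k-1))) - 1) * Real.exp (η * (tk k - tk (k-1))) :=
          mul_le_mul_of_nonneg_right h2' hEd.le
        have q2 : (Real.exp (η * (tk k - tk (k-1))) - 1) * Real.exp (η * (tk k - tk (k-1)))
            ≤ (Real.exp (η * (tk k - tk (k-1))) - 1) * Real.exp (η * Δ) :=
          mul_le_mul_of_nonneg_left h3 (by nlinarith)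
        have q4 : p * Real.exp (η * tk (k-1)) *
              (η * (tk k - tk (k-1)) * Real.exp (η * (tk k - tk (k-1))))
            ≤ p * Real.exp (η * tk (k-1)) *
              ((Real.exp (η * (tk k - tk (k-1))) - 1) * Real.exp (η * Δ)) :=
          mul_le_mul_of_nonneg_left (q1.trans q2) (mul_nonneg hp hEa.le)
        have hint1 : pk k * (Real.exp (η * tk (k-1)) * Real.exp (η * (tk k - tk (k-1))) * η)
            ≤ p * (tk k - tk (k-1)) *
              (Real.exp (η * tk (k-1)) * Real.exp (η * (tk k - tk (k-1))) * η) :=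
          mul_le_mul_of_nonneg_right hpkd (by positivity)
        nlinarith [q4, hint1]
      have hEt : 0 < Real.exp (-η * t) := Real.exp_pos _
      rw [div_mul_eq_mul_div, div_mul_eq_mul_div, le_div_iff₀ hη]
      nlinarith [mul_le_mul_of_nonneg_right hkey hEt.le]
    · rw [if_neg h]
      have hmono' : g (k - 1) ≤ g k := by
        apply Real.exp_le_exp.2
        exact mul_le_mul_of_nonneg_left (min_le_min hlt.le le_rfl) hη.le
      exact mul_nonneg (mul_nonneg hC0 (Real.exp_pos (-η * t)).le) (sub_nonneg.2 hmono')
  calc ∑ k ∈ Finset.Ico 1 M, (if tk k ≤ t then pk k * Real.exp (-η * (t - tk k)) else 0)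
      ≤ ∑ k ∈ Finset.Ico 1 M, p * Real.exp (η * Δ) / η * Real.exp (-η * t) * (g k - g (k - 1)) :=
        Finset.sum_le_sum fun k hk => hper k (Finset.mem_Ico.mp hk).1
    _ = p * Real.exp (η * Δ) / η * Real.exp (-η * t) *
        ∑ k ∈ Finset.Ico 1 M, (g k - g (k - 1)) := by rw [← Finset.mul_sum]
    _ ≤ p * Real.exp (η * Δ) / η := by
        have htel : ∑ k ∈ Finset.Ico 1 M, (g k - g (k - 1)) = g (M - 1) - g 0 := by
          rw [Finset.sum_Ico_eq_sum_range]
          have : ∀ i : ℕ, g (1 + i) - g (1 + i - 1) = g (i + 1) - g i := by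
            intro i
            congr 2 <;> omega
          rw [Finset.sum_congr rfl fun i _ => this i]
          exact Finset.sum_range_sub g (M - 1)
        rw [htel]
        have hgle : g (M - 1) ≤ Real.exp (η * t) :=
          Real.exp_le_exp.2 (mul_le_mul_of_nonneg_left (min_le_right _ _) hη.le)
        have hg0 : 0 < g 0 := Real.exp_pos _
        have hee : Real.exp (-η * t) * Real.exp (η * t) = 1 := by
          rw [← Real.exp_add]
          norm_num
        have hEt : 0 < Real.exp (-η * t) := Real.exp_pos _
        have s1 := mul_le_mul_of_nonneg_left
          (show g (M - 1) - g 0 ≤ Real.exp (η * t) by linarith) (mul_nonneg hC0 hEt.le)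
        have s2 : p * Real.exp (η * Δ) / η * (Real.exp (-η * t) * Real.exp (η * t))
            = p * Real.exp (η * Δ) / η := by rw [hee, mul_one]
        linarith [s1, s2]

theorem stmt_9 (η p Δ : ℝ) (hη : 0 < η) (hp : 0 ≤ p) (hΔ : 0 < Δ)
    (tk : ℕ → ℝ) (ht1 : 0 < tk 1) (hmono : StrictMono tk)
    (htop : Tendsto tk atTop atTop)
    (hgap : ∀ k : ℕ, 1 ≤ k → tk k - tk (k - 1) ≤ Δ)
    (pk : ℕ → ℝ) (hpk0 : ∀ k, 0 ≤ pk k)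
    (hpk : ∀ k : ℕ, 1 ≤ k → pk k ≤ p * (tk k - tk (k - 1)))
    (x : ℕ → ℝ) (hx : Tendsto x atTop (nhds 0)) :
    Tendsto (fun t : ℝ =>
        ∑' k : ℕ, if 1 ≤ k ∧ tk k ≤ t then pk k * Real.exp (-η * (t - tk k)) * |x k| else 0)
      atTop (nhds 0) := by
  have hFnn : ∀ (t : ℝ) (k : ℕ),
      0 ≤ (if 1 ≤ k ∧ tk k ≤ t then pk k * Real.exp (-η * (t - tk k)) * |x k| else 0) := by
    intro t k
    split
    · have := hpk0 k; positivity
    · exact le_refl 0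
  rw [Metric.tendsto_atTop]
  intro ε hε
  set C : ℝ := p * Real.exp (η * Δ) / η with hC
  have hC0 : 0 ≤ C := by positivity
  have hε' : 0 < ε / (3 * (C + 1)) := by positivity
  obtain ⟨N0, hN0⟩ := Metric.tendsto_atTop.mp hx (ε / (3 * (C + 1))) hε'
  set N := max N0 1 with hN
  have hN1 : 1 ≤ N := le_max_right _ _
  have hxb : ∀ k, N ≤ k → |x k| ≤ ε / (3 * (C + 1)) := by
    intro k hk
    have := hN0 k (le_trans (le_max_left _ _) hk)
    rw [Real.dist_eq, sub_zero] at this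
    exact this.le
  set A : ℝ := ∑ k ∈ Finset.range N, pk k * Real.exp (η * tk k) * |x k| with hA
  have hA0 : 0 ≤ A := Finset.sum_nonneg fun k _ => by have := hpk0 k; positivity
  have hlim : Tendsto (fun t : ℝ => Real.exp (-η * t) * A) atTop (nhds 0) := by
    have h0 : Tendsto (fun t : ℝ => η * t) atTop atTop :=
      Tendsto.const_mul_atTop hη tendsto_id
    have h1 : Tendsto (fun t : ℝ => -η * t) atTop atBot :=
      Tendsto.congr (fun t => by simp [neg_mul]) (tendsto_neg_atTop_atBot.comp h0)
    simpa using ((Real.tendsto_exp_atBot.comp h1).mul_const A)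
  obtain ⟨T, hT⟩ := Metric.tendsto_atTop.mp hlim (ε / 3) (by linarith)
  refine ⟨T, fun t ht => ?_⟩
  obtain ⟨K0, hK0⟩ := Filter.eventually_atTop.mp (htop.eventually (eventually_gt_atTop t))
  set M := max K0 N with hM
  have hNM : N ≤ M := le_max_right _ _
  have hsupp : ∀ k ∉ Finset.range M,
      (if 1 ≤ k ∧ tk k ≤ t then pk k * Real.exp (-η * (t - tk k)) * |x k| else 0) = 0 := by
    intro k hk
    rw [Finset.mem_range, not_lt] at hk
    rw [if_neg]
    rintro ⟨-, h2⟩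
    exact absurd h2 (not_le.2 (hK0 k (le_trans (le_max_left _ _) hk)))
  rw [Real.dist_eq, sub_zero, abs_of_nonneg (tsum_nonneg (hFnn t)), tsum_eq_sum hsupp]
  have hsplit : ∑ k ∈ Finset.range M,
        (if 1 ≤ k ∧ tk k ≤ t then pk k * Real.exp (-η * (t - tk k)) * |x k| else 0)
      = (∑ k ∈ Finset.range N,
          (if 1 ≤ k ∧ tk k ≤ t then pk k * Real.exp (-η * (t - tk k)) * |x k| else 0))
        + ∑ k ∈ Finset.Ico N M,
          (if 1 ≤ k ∧ tk k ≤ t then pk k * Real.exp (-η * (t - tk k)) * |x k| else 0) := by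
    exact (Finset.sum_range_add_sum_Ico _ hNM).symm
  rw [hsplit]
  have hhead : ∑ k ∈ Finset.range N,
      (if 1 ≤ k ∧ tk k ≤ t then pk k * Real.exp (-η * (t - tk k)) * |x k| else 0)
      ≤ Real.exp (-η * t) * A := by
    rw [hA, Finset.mul_sum]
    apply Finset.sum_le_sum
    intro k _
    by_cases hc : 1 ≤ k ∧ tk k ≤ t
    · rw [if_pos hc]
      have he : Real.exp (-η * (t - tk k)) = Real.exp (-η * t) * Real.exp (η * tk k) := by
        rw [← Real.exp_add]; ring_nf
      rw [he]; ring_nf; exact le_rfl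
    · rw [if_neg hc]
      have := hpk0 k; positivity
  have htail : ∑ k ∈ Finset.Ico N M,
      (if 1 ≤ k ∧ tk k ≤ t then pk k * Real.exp (-η * (t - tk k)) * |x k| else 0)
      ≤ ε / (3 * (C + 1)) * C := by
    have h1 : ∀ k ∈ Finset.Ico N M,
        (if 1 ≤ k ∧ tk k ≤ t then pk k * Real.exp (-η * (t - tk k)) * |x k| else 0)
        ≤ ε / (3 * (C + 1)) * (if tk k ≤ t then pk k * Real.exp (-η * (t - tk k)) else 0) := by
      intro k hk
      obtain ⟨hk1, hk2⟩ := Finset.mem_Ico.mp hk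
      have hk1' : 1 ≤ k := le_trans hN1 hk1
      by_cases hc : tk k ≤ t
      · rw [if_pos ⟨hk1', hc⟩, if_pos hc]
        have hxk := hxb k hk1
        have hE := Real.exp_pos (-η * (t - tk k))
        have hpk' := hpk0 k
        nlinarith [mul_nonneg hpk' hE.le, abs_nonneg (x k)]
      · rw [if_neg (fun hc' => hc hc'.2), if_neg hc, mul_zero]
    calc ∑ k ∈ Finset.Ico N M,
          (if 1 ≤ k ∧ tk k ≤ t then pk k * Real.exp (-η * (t - tk k)) * |x k| else 0)
        ≤ ∑ k ∈ Finset.Ico N M,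
          ε / (3 * (C + 1)) * (if tk k ≤ t then pk k * Real.exp (-η * (t - tk k)) else 0) :=
          Finset.sum_le_sum h1
      _ = ε / (3 * (C + 1)) *
          ∑ k ∈ Finset.Ico N M, (if tk k ≤ t then pk k * Real.exp (-η * (t - tk k)) else 0) := by
          rw [← Finset.mul_sum]
      _ ≤ ε / (3 * (C + 1)) *
          ∑ k ∈ Finset.Ico 1 M, (if tk k ≤ t then pk k * Real.exp (-η * (t - tk k)) else 0) := by
          apply mul_le_mul_of_nonneg_left _ hε'.le
          apply Finset.sum_le_sum_of_subset_of_nonneg (Finset.Ico_subset_Ico hN1 le_rfl)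
          intro k _ _
          split
          · have := hpk0 k; positivity
          · exact le_refl 0
      _ ≤ ε / (3 * (C + 1)) * C :=
          mul_le_mul_of_nonneg_left
            (key_sum η p Δ hη hp tk hmono hgap pk hpk0 hpk t M) hε'.le
  have hT' := hT t ht
  rw [Real.dist_eq, sub_zero, abs_of_nonneg (by positivity)] at hT'
  have htailε : ε / (3 * (C + 1)) * C ≤ ε / 3 := by
    rw [div_mul_eq_mul_div, div_le_div_iff₀ (by positivity) (by norm_num : (0:ℝ) < 3)]
    nlinarith
  linarith
end
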